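/- arXiv:1607.08769 — 8 statements merged into one kernel-verified Lean document; each statement's English description precedes it below -/
import Mathlib

section
/- The quotient G_𝒦 = 𝒫/≅ carries a group structure such that: the product of the classes of (a, f₁, g₁) and (b, f₂, g₂) equals the class of (c, f₁ ≫ p, g₂ ≫ q) for any choice of p : a ⟶ c, q : b ⟶ c with g₁ ≫ p = f₂ ≫ q; the identity element is the class of (𝟙, id_𝟙, id_𝟙); and the inverse of the class of (a, f, g) is the class of (a, g, f). -/
open CategoryTheory

/-- the quotient G_𝒦 = 𝒫/≅ carries a group structure such that
the product of classes is given by the fraction product, the identity element is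
the class of (𝟙, id, id), and the inverse of the class of (a, f, g) is the class
of (a, g, f). -/
theorem group_of_fractions
    {K : Type*} [SmallCategory K] (one : K)
    (unit : ∀ a : K, Nonempty (one ⟶ a))
    (stab : ∀ {a b : K} (f : one ⟶ a) (g : one ⟶ b),
      ∃ (c : K) (p : a ⟶ c) (q : b ⟶ c), f ≫ p = g ≫ q)
    (cancel : ∀ {a b : K} (f : one ⟶ a) (p q : a ⟶ b), f ≫ p = f ≫ q → p = q) :
    ∀ rel : (Σ a : K, (one ⟶ a) × (one ⟶ a)) → (Σ a : K, (one ⟶ a) × (one ⟶ a)) → Prop,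
      (rel = fun x y => ∃ (c : K) (p : x.1 ⟶ c) (q : y.1 ⟶ c),
        x.2.1 ≫ p = y.2.1 ≫ q ∧ x.2.2 ≫ p = y.2.2 ≫ q) →
      ∃ (mul : Quot rel → Quot rel → Quot rel) (e : Quot rel) (inv : Quot rel → Quot rel),
        -- group axioms
        (∀ x y z, mul (mul x y) z = mul x (mul y z)) ∧
        (∀ x, mul e x = x) ∧ (∀ x, mul x e = x) ∧
        (∀ x, mul (inv x) x = e) ∧ (∀ x, mul x (inv x) = e) ∧
        -- the product of classes is the fraction product
        (∀ (a b c : K) (f₁ g₁ : one ⟶ a) (f₂ g₂ : one ⟶ b) (p : a ⟶ c) (q : b ⟶ c),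
          g₁ ≫ p = f₂ ≫ q →
          mul (Quot.mk rel ⟨a, f₁, g₁⟩) (Quot.mk rel ⟨b, f₂, g₂⟩)
            = Quot.mk rel ⟨c, f₁ ≫ p, g₂ ≫ q⟩) ∧
        -- the identity element
        (e = Quot.mk rel ⟨one, 𝟙 one, 𝟙 one⟩) ∧
        -- the inverse
        (∀ (a : K) (f g : one ⟶ a),
          inv (Quot.mk rel ⟨a, f, g⟩) = Quot.mk rel ⟨a, g, f⟩) := by
  intro rel hrel
  classical
  have relOf : ∀ (x y : Σ a : K, (one ⟶ a) × (one ⟶ a)),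
      (∃ (c : K) (p : x.1 ⟶ c) (q : y.1 ⟶ c),
        x.2.1 ≫ p = y.2.1 ≫ q ∧ x.2.2 ≫ p = y.2.2 ≫ q) → rel x y := by
    intro x y h; rw [hrel]; exact h
  have relTo : ∀ (x y : Σ a : K, (one ⟶ a) × (one ⟶ a)), rel x y →
      (∃ (c : K) (p : x.1 ⟶ c) (q : y.1 ⟶ c),
        x.2.1 ≫ p = y.2.1 ≫ q ∧ x.2.2 ≫ p = y.2.2 ≫ q) := by
    intro x y h; rw [hrel] at h; exact h
  -- Key lemma: the fraction product is independent of the choice of (c, p, q).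
  have key : ∀ {a b c c' : K} (f₁ g₁ : one ⟶ a) (f₂ g₂ : one ⟶ b)
      (p : a ⟶ c) (q : b ⟶ c) (p' : a ⟶ c') (q' : b ⟶ c'),
      g₁ ≫ p = f₂ ≫ q → g₁ ≫ p' = f₂ ≫ q' →
      rel ⟨c, f₁ ≫ p, g₂ ≫ q⟩ ⟨c', f₁ ≫ p', g₂ ≫ q'⟩ := by
    intro a b c c' f₁ g₁ f₂ g₂ p q p' q' h h'
    obtain ⟨d, r, s, hrs⟩ := stab (g₁ ≫ p) (g₁ ≫ p')
    have hp : p ≫ r = p' ≫ s := by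
      apply cancel g₁
      simpa using hrs
    have hq : q ≫ r = q' ≫ s := by
      apply cancel f₂
      rw [← Category.assoc, ← h, ← Category.assoc, ← h']
      simpa using hrs
    refine relOf _ _ ⟨d, r, s, ?_, ?_⟩ <;> simp only
    · rw [Category.assoc, Category.assoc, hp]
    · rw [Category.assoc, Category.assoc, hq]
  -- the unnormalized product, via choice
  let prod : (Σ a : K, (one ⟶ a) × (one ⟶ a)) → (Σ a : K, (one ⟶ a) × (one ⟶ a)) →
      (Σ a : K, (one ⟶ a) × (one ⟶ a)) := fun x y =>
    ⟨(stab x.2.2 y.2.1).choose,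
      x.2.1 ≫ (stab x.2.2 y.2.1).choose_spec.choose,
      y.2.2 ≫ (stab x.2.2 y.2.1).choose_spec.choose_spec.choose⟩
  have prod_spec : ∀ (x y : Σ a : K, (one ⟶ a) × (one ⟶ a)),
      x.2.2 ≫ (stab x.2.2 y.2.1).choose_spec.choose
        = y.2.1 ≫ (stab x.2.2 y.2.1).choose_spec.choose_spec.choose :=
    fun x y => (stab x.2.2 y.2.1).choose_spec.choose_spec.choose_spec
  -- the product equals any fraction product
  have prod_eq : ∀ (a b c : K) (f₁ g₁ : one ⟶ a) (f₂ g₂ : one ⟶ b) (p : a ⟶ c) (q : b ⟶ c),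
      g₁ ≫ p = f₂ ≫ q →
      Quot.mk rel (prod ⟨a, f₁, g₁⟩ ⟨b, f₂, g₂⟩) = Quot.mk rel ⟨c, f₁ ≫ p, g₂ ≫ q⟩ := by
    intro a b c f₁ g₁ f₂ g₂ p q h
    exact Quot.sound (key f₁ g₁ f₂ g₂ _ _ p q (prod_spec ⟨a, f₁, g₁⟩ ⟨b, f₂, g₂⟩) h)
  -- well-definedness
  have wd_right : ∀ (x y₁ y₂ : Σ a : K, (one ⟶ a) × (one ⟶ a)), rel y₁ y₂ →
      Quot.mk rel (prod x y₁) = Quot.mk rel (prod x y₂) := by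
    rintro ⟨a, f₁, g₁⟩ ⟨b, f₂, g₂⟩ ⟨b', f₂', g₂'⟩ h
    obtain ⟨e, u, v, h1, h2⟩ := relTo _ _ h
    simp only at h1 h2
    obtain ⟨d, r, s, hrs⟩ := stab g₁ (f₂ ≫ u)
    have e1 : Quot.mk rel (prod ⟨a, f₁, g₁⟩ ⟨b, f₂, g₂⟩)
        = Quot.mk rel ⟨d, f₁ ≫ r, g₂ ≫ (u ≫ s)⟩ :=
      prod_eq a b d f₁ g₁ f₂ g₂ r (u ≫ s) (by rw [hrs, Category.assoc])
    have e2 : Quot.mk rel (prod ⟨a, f₁, g₁⟩ ⟨b', f₂', g₂'⟩)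
        = Quot.mk rel ⟨d, f₁ ≫ r, g₂' ≫ (v ≫ s)⟩ :=
      prod_eq a b' d f₁ g₁ f₂' g₂' r (v ≫ s) (by rw [hrs, h1, Category.assoc])
    rw [e1, e2, ← Category.assoc, ← Category.assoc, h2]
  have wd_left : ∀ (x₁ x₂ y : Σ a : K, (one ⟶ a) × (one ⟶ a)), rel x₁ x₂ →
      Quot.mk rel (prod x₁ y) = Quot.mk rel (prod x₂ y) := by
    rintro ⟨a, f₁, g₁⟩ ⟨a', f₁', g₁'⟩ ⟨b, f₂, g₂⟩ h
    obtain ⟨e, u, v, h1, h2⟩ := relTo _ _ h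
    simp only at h1 h2
    obtain ⟨d, r, s, hrs⟩ := stab (g₁ ≫ u) f₂
    rw [Category.assoc] at hrs
    have e1 : Quot.mk rel (prod ⟨a, f₁, g₁⟩ ⟨b, f₂, g₂⟩)
        = Quot.mk rel ⟨d, f₁ ≫ (u ≫ r), g₂ ≫ s⟩ :=
      prod_eq a b d f₁ g₁ f₂ g₂ (u ≫ r) s hrs
    have e2 : Quot.mk rel (prod ⟨a', f₁', g₁'⟩ ⟨b, f₂, g₂⟩)
        = Quot.mk rel ⟨d, f₁' ≫ (v ≫ r), g₂ ≫ s⟩ :=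
      prod_eq a' b d f₁' g₁' f₂ g₂ (v ≫ r) s
        (by rw [← Category.assoc, ← h2, Category.assoc]; exact hrs)
    rw [e1, e2, ← Category.assoc, ← Category.assoc, h1]
  -- the multiplication, identity and inverse
  let mul : Quot rel → Quot rel → Quot rel :=
    Quot.lift₂ (fun x y => Quot.mk rel (prod x y)) (fun x y₁ y₂ h => wd_right x y₁ y₂ h)
      (fun x₁ x₂ y h => wd_left x₁ x₂ y h)
  have mul_mk : ∀ x y, mul (Quot.mk rel x) (Quot.mk rel y) = Quot.mk rel (prod x y) :=
    fun _ _ => rfl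
  have mul_eq : ∀ (a b c : K) (f₁ g₁ : one ⟶ a) (f₂ g₂ : one ⟶ b) (p : a ⟶ c) (q : b ⟶ c),
      g₁ ≫ p = f₂ ≫ q →
      mul (Quot.mk rel ⟨a, f₁, g₁⟩) (Quot.mk rel ⟨b, f₂, g₂⟩)
        = Quot.mk rel ⟨c, f₁ ≫ p, g₂ ≫ q⟩ :=
    fun a b c f₁ g₁ f₂ g₂ p q h =>
      (mul_mk ⟨a, f₁, g₁⟩ ⟨b, f₂, g₂⟩).trans (prod_eq a b c f₁ g₁ f₂ g₂ p q h)
  let inv : Quot rel → Quot rel :=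
    Quot.lift (fun x => Quot.mk rel ⟨x.1, x.2.2, x.2.1⟩) (by
      rintro ⟨a, f, g⟩ ⟨b, f', g'⟩ h
      obtain ⟨c, p, q, h1, h2⟩ := relTo _ _ h
      exact Quot.sound (relOf _ _ ⟨c, p, q, h2, h1⟩))
  refine ⟨mul, Quot.mk rel ⟨one, 𝟙 one, 𝟙 one⟩, inv, ?_, ?_, ?_, ?_, ?_, mul_eq, rfl,
    fun a f g => rfl⟩
  · -- associativity
    intro x y z
    induction x using Quot.ind with | _ x =>
    induction y using Quot.ind with | _ y =>
    induction z using Quot.ind with | _ z =>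
    obtain ⟨a, f₁, g₁⟩ := x
    obtain ⟨b, f₂, g₂⟩ := y
    obtain ⟨c, f₃, g₃⟩ := z
    obtain ⟨d, p, q, hpq⟩ := stab g₁ f₂
    obtain ⟨e, u, v, huv⟩ := stab (g₂ ≫ q) f₃
    rw [mul_eq a b d f₁ g₁ f₂ g₂ p q hpq,
      mul_eq d c e (f₁ ≫ p) (g₂ ≫ q) f₃ g₃ u v huv,
      mul_eq b c e f₂ g₂ f₃ g₃ (q ≫ u) v (by rw [← Category.assoc]; exact huv),
      mul_eq a e e f₁ g₁ (f₂ ≫ (q ≫ u)) (g₃ ≫ v) (p ≫ u) (𝟙 e)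
        (by simp only [Category.comp_id, ← Category.assoc]; rw [hpq])]
    simp
  · -- left identity
    intro x
    induction x using Quot.ind with | _ x =>
    obtain ⟨a, f, g⟩ := x
    rw [mul_eq one a a (𝟙 one) (𝟙 one) f g f (𝟙 a) (by simp)]
    simp
  · -- right identity
    intro x
    induction x using Quot.ind with | _ x =>
    obtain ⟨a, f, g⟩ := x
    rw [mul_eq a one a f g (𝟙 one) (𝟙 one) (𝟙 a) g (by simp)]
    simp
  · -- left inverse
    intro x
    induction x using Quot.ind with | _ x =>
    obtain ⟨a, f, g⟩ := x
    have : inv (Quot.mk rel ⟨a, f, g⟩) = Quot.mk rel ⟨a, g, f⟩ := rfl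
    rw [this, mul_eq a a a g f f g (𝟙 a) (𝟙 a) rfl]
    exact Quot.sound (relOf _ _ ⟨a, 𝟙 a, g, by simp, by simp⟩)
  · -- right inverse
    intro x
    induction x using Quot.ind with | _ x =>
    obtain ⟨a, f, g⟩ := x
    have : inv (Quot.mk rel ⟨a, f, g⟩) = Quot.mk rel ⟨a, g, f⟩ := rfl
    rw [this, mul_eq a a a f g g f (𝟙 a) (𝟙 a) rfl]
    exact Quot.sound (relOf _ _ ⟨a, 𝟙 a, f, by simp, by simp⟩)
end

section
/- Let Φ : 𝒦 ⥤ 𝒞 be a functor into a category 𝒞. Then the group of fractions G_𝒦 = 𝒫/≅ acts on the quotient 𝒬/≅_Φ by the rule: the class of (a, f₁, g₁) ∈ 𝒫 sends the class of (b, f₂, v) ∈ 𝒬 to the class of (c, f₁ ≫ p, v ≫ Φ(q)) for any choice of p : a ⟶ c, q : b ⟶ c with g₁ ≫ p = f₂ ≫ q; this rule is independent of the choices of p, q and of the representatives, and it satisfies the group-action axioms (the identity class acts as the identity, and the class of a product acts as the composition of the actions). -/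
open CategoryTheory

section Aux

variable {K : Type*} [SmallCategory K] {C : Type*} [Category C] {one : K} (Φ : K ⥤ C)

/-- Raw action on representatives, using a choice from stabilisation. -/
noncomputable def fracActRaw
    (stab : ∀ {a b : K} (f : one ⟶ a) (g : one ⟶ b),
      ∃ (c : K) (p : a ⟶ c) (q : b ⟶ c), f ≫ p = g ≫ q)
    (x : Σ a : K, (one ⟶ a) × (one ⟶ a))
    (y : Σ a : K, (one ⟶ a) × (Φ.obj one ⟶ Φ.obj a)) :
    Σ a : K, (one ⟶ a) × (Φ.obj one ⟶ Φ.obj a) :=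
  ⟨(stab x.2.2 y.2.1).choose,
    x.2.1 ≫ (stab x.2.2 y.2.1).choose_spec.choose,
    y.2.2 ≫ Φ.map (stab x.2.2 y.2.1).choose_spec.choose_spec.choose⟩

theorem fracActRaw_spec
    (stab : ∀ {a b : K} (f : one ⟶ a) (g : one ⟶ b),
      ∃ (c : K) (p : a ⟶ c) (q : b ⟶ c), f ≫ p = g ≫ q)
    (x : Σ a : K, (one ⟶ a) × (one ⟶ a))
    (y : Σ a : K, (one ⟶ a) × (Φ.obj one ⟶ Φ.obj a)) :
    x.2.2 ≫ (stab x.2.2 y.2.1).choose_spec.choose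
      = y.2.1 ≫ (stab x.2.2 y.2.1).choose_spec.choose_spec.choose :=
  (stab x.2.2 y.2.1).choose_spec.choose_spec.choose_spec

end Aux

/-- the group of fractions G_𝒦 = 𝒫/≅ acts on 𝒬/≅_Φ: there is a map
`act` sending the class of (a, f₁, g₁) and the class of (b, f₂, v) to the class of
(c, f₁ ≫ p, v ≫ Φ(q)) whenever g₁ ≫ p = f₂ ≫ q; this is independent of the choices
and satisfies the group-action axioms (the identity class acts as the identity and
the class of a fraction product acts as the composition of the actions). -/
theorem group_of_fractions_action
    {K : Type*} [SmallCategory K] {C : Type*} [Category C] (one : K)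
    (unit : ∀ a : K, Nonempty (one ⟶ a))
    (stab : ∀ {a b : K} (f : one ⟶ a) (g : one ⟶ b),
      ∃ (c : K) (p : a ⟶ c) (q : b ⟶ c), f ≫ p = g ≫ q)
    (cancel : ∀ {a b : K} (f : one ⟶ a) (p q : a ⟶ b), f ≫ p = f ≫ q → p = q)
    (Φ : K ⥤ C) :
    ∀ (rel : (Σ a : K, (one ⟶ a) × (one ⟶ a)) →
             (Σ a : K, (one ⟶ a) × (one ⟶ a)) → Prop)
      (relΦ : (Σ a : K, (one ⟶ a) × (Φ.obj one ⟶ Φ.obj a)) →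
              (Σ a : K, (one ⟶ a) × (Φ.obj one ⟶ Φ.obj a)) → Prop),
      (rel = fun x y => ∃ (c : K) (p : x.1 ⟶ c) (q : y.1 ⟶ c),
        x.2.1 ≫ p = y.2.1 ≫ q ∧ x.2.2 ≫ p = y.2.2 ≫ q) →
      (relΦ = fun x y => ∃ (c : K) (p : x.1 ⟶ c) (q : y.1 ⟶ c),
        x.2.1 ≫ p = y.2.1 ≫ q ∧ x.2.2 ≫ Φ.map p = y.2.2 ≫ Φ.map q) →
      ∃ act : Quot rel → Quot relΦ → Quot relΦ,
        -- the defining rule, independent of all choices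
        (∀ (a b c : K) (f₁ g₁ : one ⟶ a) (f₂ : one ⟶ b) (v : Φ.obj one ⟶ Φ.obj b)
            (p : a ⟶ c) (q : b ⟶ c),
          g₁ ≫ p = f₂ ≫ q →
          act (Quot.mk rel ⟨a, f₁, g₁⟩) (Quot.mk relΦ ⟨b, f₂, v⟩)
            = Quot.mk relΦ ⟨c, f₁ ≫ p, v ≫ Φ.map q⟩) ∧
        -- the identity class acts as the identity
        (∀ w : Quot relΦ, act (Quot.mk rel ⟨one, 𝟙 one, 𝟙 one⟩) w = w) ∧
        -- the class of a fraction product acts as the composition of the actions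
        (∀ (a b c : K) (f₁ g₁ : one ⟶ a) (f₂ g₂ : one ⟶ b) (p : a ⟶ c) (q : b ⟶ c),
          g₁ ≫ p = f₂ ≫ q →
          ∀ w : Quot relΦ,
            act (Quot.mk rel ⟨c, f₁ ≫ p, g₂ ≫ q⟩) w
              = act (Quot.mk rel ⟨a, f₁, g₁⟩) (act (Quot.mk rel ⟨b, f₂, g₂⟩) w)) := by
  intro rel relΦ hrel hrelΦ
  classical
  -- introduction rule for relΦ
  have relΦ_intro : ∀ (x y : Σ a : K, (one ⟶ a) × (Φ.obj one ⟶ Φ.obj a))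
      (c : K) (p : x.1 ⟶ c) (q : y.1 ⟶ c),
      x.2.1 ≫ p = y.2.1 ≫ q → x.2.2 ≫ Φ.map p = y.2.2 ≫ Φ.map q → relΦ x y := by
    intro x y c p q h1 h2
    rw [hrelΦ]
    exact ⟨c, p, q, h1, h2⟩
  -- KEY: independence of the choice of (c, p, q)
  have key : ∀ (a b : K) (f₁ g₁ : one ⟶ a) (f₂ : one ⟶ b) (v : Φ.obj one ⟶ Φ.obj b)
      (c c' : K) (p : a ⟶ c) (q : b ⟶ c) (p' : a ⟶ c') (q' : b ⟶ c'),
      g₁ ≫ p = f₂ ≫ q → g₁ ≫ p' = f₂ ≫ q' →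
      relΦ ⟨c, f₁ ≫ p, v ≫ Φ.map q⟩ ⟨c', f₁ ≫ p', v ≫ Φ.map q'⟩ := by
    intro a b f₁ g₁ f₂ v c c' p q p' q' h h'
    obtain ⟨d, r, s, hrs⟩ := stab (g₁ ≫ p) (g₁ ≫ p')
    have hp : p ≫ r = p' ≫ s := cancel g₁ _ _ (by simpa [Category.assoc] using hrs)
    have hq : q ≫ r = q' ≫ s := by
      apply cancel f₂
      rw [← Category.assoc, ← h, ← Category.assoc, ← h', Category.assoc, Category.assoc, hp]
    refine relΦ_intro _ _ d r s ?_ ?_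
    · simp only [Category.assoc, hp]
    · simp only [Category.assoc, ← Φ.map_comp, hq]
  -- well-definedness in the second argument
  have wd2 : ∀ (x : Σ a : K, (one ⟶ a) × (one ⟶ a))
      (y y' : Σ a : K, (one ⟶ a) × (Φ.obj one ⟶ Φ.obj a)), relΦ y y' →
      Quot.mk relΦ (fracActRaw Φ @stab x y) = Quot.mk relΦ (fracActRaw Φ @stab x y') := by
    intro x y y' hyy
    rw [hrelΦ] at hyy
    obtain ⟨e, u, u', h1, h2⟩ := hyy
    obtain ⟨d, P, Q, hPQ⟩ := stab x.2.2 (y.2.1 ≫ u)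
    have e1 : Quot.mk relΦ (fracActRaw Φ @stab x y)
        = Quot.mk relΦ ⟨d, x.2.1 ≫ P, y.2.2 ≫ Φ.map (u ≫ Q)⟩ := by
      apply Quot.sound
      exact key x.1 y.1 x.2.1 x.2.2 y.2.1 y.2.2 _ d _ _ P (u ≫ Q)
        (fracActRaw_spec Φ @stab x y) (by rw [hPQ, Category.assoc])
    have e2 : Quot.mk relΦ (fracActRaw Φ @stab x y')
        = Quot.mk relΦ ⟨d, x.2.1 ≫ P, y'.2.2 ≫ Φ.map (u' ≫ Q)⟩ := by
      apply Quot.sound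
      exact key x.1 y'.1 x.2.1 x.2.2 y'.2.1 y'.2.2 _ d _ _ P (u' ≫ Q)
        (fracActRaw_spec Φ @stab x y') (by rw [hPQ, h1, Category.assoc])
    have e3 : y.2.2 ≫ Φ.map (u ≫ Q) = y'.2.2 ≫ Φ.map (u' ≫ Q) := by
      rw [Φ.map_comp, Φ.map_comp, ← Category.assoc, h2, Category.assoc]
    rw [e1, e2, e3]
  -- well-definedness in the first argument
  have wd1 : ∀ (x x' : Σ a : K, (one ⟶ a) × (one ⟶ a))
      (y : Σ a : K, (one ⟶ a) × (Φ.obj one ⟶ Φ.obj a)), rel x x' →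
      Quot.mk relΦ (fracActRaw Φ @stab x y) = Quot.mk relΦ (fracActRaw Φ @stab x' y) := by
    intro x x' y hxx
    rw [hrel] at hxx
    obtain ⟨e, u, u', h1, h2⟩ := hxx
    obtain ⟨d, P, Q, hPQ⟩ := stab (x.2.2 ≫ u) y.2.1
    have e1 : Quot.mk relΦ (fracActRaw Φ @stab x y)
        = Quot.mk relΦ ⟨d, x.2.1 ≫ (u ≫ P), y.2.2 ≫ Φ.map Q⟩ := by
      apply Quot.sound
      exact key x.1 y.1 x.2.1 x.2.2 y.2.1 y.2.2 _ d _ _ (u ≫ P) Q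
        (fracActRaw_spec Φ @stab x y) (by rw [← Category.assoc, hPQ])
    have e2 : Quot.mk relΦ (fracActRaw Φ @stab x' y)
        = Quot.mk relΦ ⟨d, x'.2.1 ≫ (u' ≫ P), y.2.2 ≫ Φ.map Q⟩ := by
      apply Quot.sound
      exact key x'.1 y.1 x'.2.1 x'.2.2 y.2.1 y.2.2 _ d _ _ (u' ≫ P) Q
        (fracActRaw_spec Φ @stab x' y)
        (by rw [← Category.assoc, ← h2, Category.assoc, ← Category.assoc, hPQ])
    have e3 : x.2.1 ≫ (u ≫ P) = x'.2.1 ≫ (u' ≫ P) := by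
      rw [← Category.assoc, h1, Category.assoc]
    rw [e1, e2, e3]
  have rule : ∀ (a b c : K) (f₁ g₁ : one ⟶ a) (f₂ : one ⟶ b) (v : Φ.obj one ⟶ Φ.obj b)
      (p : a ⟶ c) (q : b ⟶ c), g₁ ≫ p = f₂ ≫ q →
      Quot.lift₂ (fun x y => Quot.mk relΦ (fracActRaw Φ @stab x y)) wd2 wd1
          (Quot.mk rel ⟨a, f₁, g₁⟩) (Quot.mk relΦ ⟨b, f₂, v⟩)
        = Quot.mk relΦ ⟨c, f₁ ≫ p, v ≫ Φ.map q⟩ := by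
    intro a b c f₁ g₁ f₂ v p q h
    apply Quot.sound
    exact key a b f₁ g₁ f₂ v _ c _ _ p q
      (fracActRaw_spec Φ @stab ⟨a, f₁, g₁⟩ ⟨b, f₂, v⟩) h
  refine ⟨Quot.lift₂ (fun x y => Quot.mk relΦ (fracActRaw Φ @stab x y)) wd2 wd1,
    rule, ?_, ?_⟩
  · -- identity
    intro w
    induction w using Quot.ind with
    | _ y =>
      obtain ⟨b, f₂, v⟩ := y
      rw [rule one b b (𝟙 one) (𝟙 one) f₂ v f₂ (𝟙 b) (by simp)]
      simp
  · -- product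
    intro a b c f₁ g₁ f₂ g₂ p q h w
    induction w using Quot.ind with
    | _ y =>
      obtain ⟨d', f₃, v⟩ := y
      obtain ⟨e, r, s, hrs⟩ := stab g₂ f₃
      obtain ⟨m, P, S, hPS⟩ := stab (g₂ ≫ q) (g₂ ≫ r)
      have hqP : q ≫ P = r ≫ S := cancel g₂ _ _ (by simpa [Category.assoc] using hPS)
      rw [rule b d' e f₂ g₂ f₃ v r s hrs]
      rw [rule a e m f₁ g₁ (f₂ ≫ r) (v ≫ Φ.map s) (p ≫ P) S
        (by rw [← Category.assoc, h, Category.assoc, hqP, Category.assoc])]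
      rw [rule c d' m (f₁ ≫ p) (g₂ ≫ q) f₃ v P (s ≫ S)
        (by rw [Category.assoc, hqP, ← Category.assoc, hrs, Category.assoc])]
      simp
end

section
/- Let E be a normed space (a normed additive commutative group suffices), let M > 0, and let f : E → E be any map satisfying ‖f(a)‖ ≤ M·‖a‖² for all a ∈ E. If x ∈ E satisfies M·‖x‖ < 1, then the iterates f^[n](x) converge to 0 as n → ∞. -/
/-- if f : E → E satisfies ‖f a‖ ≤ M‖a‖² for all a (with M > 0), and
M‖x‖ < 1, then the iterates f^[n] x converge to 0. -/
theorem iterates_tendsto_zero_of_quadratic_bound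
    {E : Type*} [NormedAddCommGroup E] (M : ℝ) (hM : 0 < M)
    (f : E → E) (hf : ∀ a : E, ‖f a‖ ≤ M * ‖a‖ ^ 2)
    (x : E) (hx : M * ‖x‖ < 1) :
    Filter.Tendsto (fun n => f^[n] x) Filter.atTop (nhds 0) := by
  set r : ℝ := M * ‖x‖ with hr
  have hr0 : 0 ≤ r := mul_nonneg hM.le (norm_nonneg x)
  have key : ∀ n, ‖f^[n] x‖ ≤ r ^ n * ‖x‖ := by
    intro n
    induction n with
    | zero => simp
    | succ n ih =>
      have h1 : ‖f^[n+1] x‖ ≤ M * ‖f^[n] x‖ ^ 2 := by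
        rw [Function.iterate_succ_apply']; exact hf _
      have h2 : M * ‖f^[n] x‖ ^ 2 ≤ M * (r ^ n * ‖x‖) ^ 2 := by
        apply mul_le_mul_of_nonneg_left _ hM.le
        exact pow_le_pow_left₀ (norm_nonneg _) ih 2
      have h3 : M * (r ^ n * ‖x‖) ^ 2 = r ^ (2 * n + 1) * ‖x‖ := by
        rw [hr]; ring
      have h4 : r ^ (2 * n + 1) ≤ r ^ (n + 1) :=
        pow_le_pow_of_le_one hr0 hx.le (by omega)
      calc ‖f^[n+1] x‖ ≤ r ^ (2 * n + 1) * ‖x‖ := by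
            rw [← h3]; exact h1.trans h2
        _ ≤ r ^ (n + 1) * ‖x‖ := mul_le_mul_of_nonneg_right h4 (norm_nonneg x)
  have : Filter.Tendsto (fun n => r ^ n * ‖x‖) Filter.atTop (nhds 0) := by
    simpa using (tendsto_pow_atTop_nhds_zero_of_lt_one hr0 hx).mul_const ‖x‖
  exact squeeze_zero_norm key this
end

section
/- For every real d ≥ 2 and all (p, q, r) ∈ ℝ³, one has ‖ℛ_d(p, q, r)‖₁ ≤ ((d+1)/(d−1))·(p+q)² + (r + ((d−2)/(d−1))·p)² + (d·(d+1)·(d−2)/(d−1)³)·p². -/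
/-- The renormalisation map ℛ_d : ℝ³ → ℝ³ in the basis {b₁, b₂, b₃} of Q₄. -/
noncomputable def renorm (d : ℝ) : ℝ × ℝ × ℝ → ℝ × ℝ × ℝ := fun x =>
  let p := x.1; let q := x.2.1; let r := x.2.2
  ( ((d ^ 2 - 5 * d + 7) / (d - 1) ^ 2) * p ^ 2 + 2 * p * q
      + (2 * (d - 2) / (d - 1)) * p * r + q ^ 2 + r ^ 2,
    -((1 / (d - 1) ^ 3) * p ^ 2 + (1 / (d - 1)) * (2 * p * q + q ^ 2)),
    ((d ^ 2 - 3 * d + 3) / (d - 1) ^ 3) * p ^ 2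
      + (1 / (d - 1)) * (2 * p * q + q ^ 2) )

/-- The ℓ¹ norm on ℝ³. -/
def normOne (x : ℝ × ℝ × ℝ) : ℝ := |x.1| + |x.2.1| + |x.2.2|

/-- for d ≥ 2 and all (p, q, r),
‖ℛ_d(p,q,r)‖₁ ≤ ((d+1)/(d−1))(p+q)² + (r + ((d−2)/(d−1))p)² + (d(d+1)(d−2)/(d−1)³)p². -/
theorem normOne_renorm_le (d : ℝ) (hd : 2 ≤ d) (p q r : ℝ) :
    normOne (renorm d (p, q, r)) ≤
      ((d + 1) / (d - 1)) * (p + q) ^ 2 + (r + ((d - 2) / (d - 1)) * p) ^ 2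
        + (d * (d + 1) * (d - 2) / (d - 1) ^ 3) * p ^ 2 := by
  have h1 : (0:ℝ) < d - 1 := by linarith
  have h1' : (d:ℝ) - 1 ≠ 0 := ne_of_gt h1
  have hd2 : (0:ℝ) ≤ d - 2 := by linarith
  simp only [normOne, renorm]
  have hK : (0:ℝ) ≤ (d + 1) * (d - 2) / (d - 1) ^ 2 * p ^ 2 := by positivity
  have hY : (0:ℝ) ≤ d * (d - 2) / (d - 1) ^ 3 * p ^ 2 := by positivity
  have hZ : (0:ℝ) ≤ (d - 2) / (d - 1) ^ 3 * p ^ 2 := by positivity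
  have hX : (0:ℝ) ≤ 1 / (d - 1) * (p + q) ^ 2 := by positivity
  have hAid : ((d ^ 2 - 5 * d + 7) / (d - 1) ^ 2) * p ^ 2 + 2 * p * q
      + (2 * (d - 2) / (d - 1)) * p * r + q ^ 2 + r ^ 2
      = ((p + q) ^ 2 + (r + (d - 2) / (d - 1) * p) ^ 2)
        - (d + 1) * (d - 2) / (d - 1) ^ 2 * p ^ 2 := by
    field_simp; ring
  have hBid : -((1 / (d - 1) ^ 3) * p ^ 2 + (1 / (d - 1)) * (2 * p * q + q ^ 2))
      = d * (d - 2) / (d - 1) ^ 3 * p ^ 2 - 1 / (d - 1) * (p + q) ^ 2 := by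
    field_simp; ring
  have hCid : ((d ^ 2 - 3 * d + 3) / (d - 1) ^ 3) * p ^ 2
      + (1 / (d - 1)) * (2 * p * q + q ^ 2)
      = 1 / (d - 1) * (p + q) ^ 2 - (d - 2) / (d - 1) ^ 3 * p ^ 2 := by
    field_simp; ring
  have hA : |((d ^ 2 - 5 * d + 7) / (d - 1) ^ 2) * p ^ 2 + 2 * p * q
      + (2 * (d - 2) / (d - 1)) * p * r + q ^ 2 + r ^ 2|
      ≤ ((p + q) ^ 2 + (r + (d - 2) / (d - 1) * p) ^ 2)
        + (d + 1) * (d - 2) / (d - 1) ^ 2 * p ^ 2 := by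
    rw [hAid, abs_le]
    constructor
    · linarith [sq_nonneg (p + q), sq_nonneg (r + (d - 2) / (d - 1) * p)]
    · linarith
  have hB : |-((1 / (d - 1) ^ 3) * p ^ 2 + (1 / (d - 1)) * (2 * p * q + q ^ 2))|
      ≤ d * (d - 2) / (d - 1) ^ 3 * p ^ 2 + 1 / (d - 1) * (p + q) ^ 2 := by
    rw [hBid, abs_le]
    exact ⟨by linarith, by linarith⟩
  have hC : |((d ^ 2 - 3 * d + 3) / (d - 1) ^ 3) * p ^ 2
      + (1 / (d - 1)) * (2 * p * q + q ^ 2)|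
      ≤ 1 / (d - 1) * (p + q) ^ 2 + (d - 2) / (d - 1) ^ 3 * p ^ 2 := by
    rw [hCid, abs_le]
    exact ⟨by linarith, by linarith⟩
  have hfin : (((p + q) ^ 2 + (r + (d - 2) / (d - 1) * p) ^ 2)
        + (d + 1) * (d - 2) / (d - 1) ^ 2 * p ^ 2)
      + (d * (d - 2) / (d - 1) ^ 3 * p ^ 2 + 1 / (d - 1) * (p + q) ^ 2)
      + (1 / (d - 1) * (p + q) ^ 2 + (d - 2) / (d - 1) ^ 3 * p ^ 2)
      = ((d + 1) / (d - 1)) * (p + q) ^ 2 + (r + ((d - 2) / (d - 1)) * p) ^ 2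
        + (d * (d + 1) * (d - 2) / (d - 1) ^ 3) * p ^ 2 := by
    field_simp; ring
  linarith [hA, hB, hC]
end

section
/- For every real d > 2, the maximum over the ℓ¹ unit ball {(p,q,r) ∈ ℝ³ : |p| + |q| + |r| ≤ 1} of the function F(p,q,r) = ((d+1)/(d−1))·(p+q)² + (r + ((d−2)/(d−1))·p)² + (d·(d+1)·(d−2)/(d−1)³)·p² equals M_d = (d+1)/(d−1) + ((d−2)/(d−1))² + d·(d+1)·(d−2)/(d−1)³. -/
set_option maxHeartbeats 1000000


/-- for d > 2, the maximum over the ℓ¹ unit ball of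
F(p,q,r) = ((d+1)/(d−1))(p+q)² + (r + ((d−2)/(d−1))p)² + (d(d+1)(d−2)/(d−1)³)p²
equals M_d = (d+1)/(d−1) + ((d−2)/(d−1))² + d(d+1)(d−2)/(d−1)³. -/
theorem max_on_l1_ball (d : ℝ) (hd : 2 < d) :
    IsGreatest
      ((fun x : ℝ × ℝ × ℝ =>
          ((d + 1) / (d - 1)) * (x.1 + x.2.1) ^ 2
            + (x.2.2 + ((d - 2) / (d - 1)) * x.1) ^ 2
            + (d * (d + 1) * (d - 2) / (d - 1) ^ 3) * x.1 ^ 2) ''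
        {x : ℝ × ℝ × ℝ | |x.1| + |x.2.1| + |x.2.2| ≤ 1})
      ((d + 1) / (d - 1) + ((d - 2) / (d - 1)) ^ 2
        + d * (d + 1) * (d - 2) / (d - 1) ^ 3) := by
  have hd1 : (0:ℝ) < d - 1 := by linarith
  set A := (d + 1) / (d - 1) with hAdef
  set B := (d - 2) / (d - 1) with hBdef
  set C := d * (d + 1) * (d - 2) / (d - 1) ^ 3 with hCdef
  have hA1 : 1 ≤ A := by
    rw [hAdef, le_div_iff₀ hd1]; linarith
  have hB0 : 0 ≤ B := by
    apply div_nonneg <;> linarith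
  have hB1 : B ≤ 1 := by
    rw [hBdef, div_le_one hd1]; linarith
  clear_value A B
  have hC0 : 0 ≤ C := by
    apply div_nonneg
    · have := mul_pos (mul_pos (by linarith : (0:ℝ) < d) (by linarith : (0:ℝ) < d + 1))
        (by linarith : (0:ℝ) < d - 2)
      linarith
    · positivity
  clear_value C
  constructor
  · refine ⟨(1, 0, 0), ?_, ?_⟩
    · simp
    · show A * (1 + 0) ^ 2 + (0 + B * 1) ^ 2 + C * 1 ^ 2 = A + B ^ 2 + C
      ring
  · rintro y ⟨⟨p, q, r⟩, h, rfl⟩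
    simp only [Set.mem_setOf_eq] at h
    set a := |p| with ha
    set b := |q| with hb
    set c := |r| with hc
    clear_value a b c
    have ha0 : 0 ≤ a := ha ▸ abs_nonneg p
    have hb0 : 0 ≤ b := hb ▸ abs_nonneg q
    have hc0 : 0 ≤ c := hc ▸ abs_nonneg r
    have h1 : (p + q) ^ 2 ≤ (a + b) ^ 2 := by
      rw [ha, hb]
      have := abs_add_le p q
      nlinarith [abs_nonneg (p + q), sq_abs (p + q), abs_nonneg p, abs_nonneg q]
    have h2 : (r + B * p) ^ 2 ≤ (c + B * a) ^ 2 := by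
      rw [hc, ha]
      have habs : |r + B * p| ≤ |r| + B * |p| := by
        calc |r + B * p| ≤ |r| + |B * p| := abs_add_le _ _
        _ = |r| + B * |p| := by rw [abs_mul, abs_of_nonneg hB0]
      nlinarith [abs_nonneg (r + B * p), sq_abs (r + B * p)]
    have h3 : p ^ 2 = a ^ 2 := by rw [ha]; exact (sq_abs p).symm
    have hM1 : 1 ≤ A + B ^ 2 + C := by linarith [sq_nonneg B]
    have hMB : B ≤ A + B ^ 2 + C := by linarith [sq_nonneg B]
    have key : A * (a + b) ^ 2 + (c + B * a) ^ 2 + C * a ^ 2 ≤ A + B ^ 2 + C := by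
      have h4 : (a + b + c) ^ 2 ≤ 1 := by nlinarith
      have step1 : A * (a + b) ^ 2 + (c + B * a) ^ 2 + C * a ^ 2
          ≤ (A + B ^ 2 + C) * (a + b + c) ^ 2 := by
        nlinarith [mul_nonneg (add_nonneg (sq_nonneg B) hC0) (sq_nonneg b),
          mul_nonneg (add_nonneg (sq_nonneg B) hC0) (mul_nonneg ha0 hb0),
          mul_nonneg (by linarith : (0:ℝ) ≤ A + B ^ 2 + C - 1) (sq_nonneg c),
          mul_nonneg (by linarith : (0:ℝ) ≤ A + B ^ 2 + C - B) (mul_nonneg ha0 hc0),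
          mul_nonneg (by linarith : (0:ℝ) ≤ A + B ^ 2 + C) (mul_nonneg hb0 hc0)]
      have step2 : (A + B ^ 2 + C) * (a + b + c) ^ 2 ≤ A + B ^ 2 + C := by
        nlinarith [mul_le_mul_of_nonneg_left h4 (by linarith : (0:ℝ) ≤ A + B ^ 2 + C)]
      linarith
    have hAp : 0 < A := by linarith
    calc A * (p + q) ^ 2 + (r + B * p) ^ 2 + C * p ^ 2
        ≤ A * (a + b) ^ 2 + (c + B * a) ^ 2 + C * a ^ 2 := by
          rw [h3]
          have := mul_le_mul_of_nonneg_left h1 (le_of_lt hAp)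
          linarith
      _ ≤ A + B ^ 2 + C := key
end

section
/- For every real d ≥ 2 and all a ∈ ℝ³, one has ‖ℛ_d(a)‖₁ ≤ M_d · ‖a‖₁², where M_d = (d+1)/(d−1) + ((d−2)/(d−1))² + d·(d+1)·(d−2)/(d−1)³. -/
/-- for d ≥ 2 and all a ∈ ℝ³, ‖ℛ_d(a)‖₁ ≤ M_d ‖a‖₁² where
M_d = (d+1)/(d−1) + ((d−2)/(d−1))² + d(d+1)(d−2)/(d−1)³. -/
theorem normOne_renorm_le_M (d : ℝ) (hd : 2 ≤ d) (a : ℝ × ℝ × ℝ) :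
    normOne (renorm d a) ≤
      ((d + 1) / (d - 1) + ((d - 2) / (d - 1)) ^ 2
        + d * (d + 1) * (d - 2) / (d - 1) ^ 3) * normOne a ^ 2 := by
  obtain ⟨p, q, r⟩ := a
  have hd1 : (0:ℝ) < d - 1 := by linarith
  have hd2 : (0:ℝ) ≤ d - 2 := by linarith
  set P := |p| with hPdef
  set Q := |q| with hQdef
  set R := |r| with hRdef
  have hP : 0 ≤ P := abs_nonneg p
  have hQ : 0 ≤ Q := abs_nonneg q
  have hR : 0 ≤ R := abs_nonneg r
  have hp2 : p ^ 2 = P ^ 2 := (sq_abs p).symm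
  have hq2 : q ^ 2 = Q ^ 2 := (sq_abs q).symm
  have hr2 : r ^ 2 = R ^ 2 := (sq_abs r).symm
  have hpq : p * q ≤ P * Q := by rw [hPdef, hQdef, ← abs_mul]; exact le_abs_self _
  have hpq' : -(P * Q) ≤ p * q := by rw [hPdef, hQdef, ← abs_mul]; exact neg_abs_le _
  have hpr : p * r ≤ P * R := by rw [hPdef, hRdef, ← abs_mul]; exact le_abs_self _
  have hpr' : -(P * R) ≤ p * r := by rw [hPdef, hRdef, ← abs_mul]; exact neg_abs_le _
  have hc1 : 0 ≤ (d ^ 2 - 5 * d + 7) / (d - 1) ^ 2 :=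
    div_nonneg (by nlinarith [sq_nonneg (d - 5/2)]) (by positivity)
  have hc2 : 0 ≤ 2 * (d - 2) / (d - 1) := div_nonneg (by linarith) (by linarith)
  have hc3 : 0 ≤ 1 / (d - 1) ^ 3 := by positivity
  have hc4 : 0 ≤ 1 / (d - 1) := by positivity
  have hc5 : 0 ≤ (d ^ 2 - 3 * d + 3) / (d - 1) ^ 3 :=
    div_nonneg (by nlinarith [sq_nonneg (d - 3/2)]) (by positivity)
  simp only [renorm, normOne]
  have h1 : |((d ^ 2 - 5 * d + 7) / (d - 1) ^ 2) * p ^ 2 + 2 * p * q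
      + (2 * (d - 2) / (d - 1)) * p * r + q ^ 2 + r ^ 2| ≤
      ((d ^ 2 - 5 * d + 7) / (d - 1) ^ 2) * P ^ 2 + 2 * (P * Q)
      + (2 * (d - 2) / (d - 1)) * (P * R) + Q ^ 2 + R ^ 2 := by
    rw [hp2, hq2, hr2, abs_le]
    have f1 := mul_le_mul_of_nonneg_left hpr hc2
    have f2 := mul_le_mul_of_nonneg_left hpr' hc2
    have f3 : 0 ≤ ((d ^ 2 - 5 * d + 7) / (d - 1) ^ 2) * P ^ 2 :=
      mul_nonneg hc1 (sq_nonneg P)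
    have f4 := sq_nonneg Q
    have f5 := sq_nonneg R
    constructor
    · linarith
    · linarith
  have h2 : |-((1 / (d - 1) ^ 3) * p ^ 2 + (1 / (d - 1)) * (2 * p * q + q ^ 2))| ≤
      (1 / (d - 1) ^ 3) * P ^ 2 + (1 / (d - 1)) * (2 * (P * Q) + Q ^ 2) := by
    rw [hp2, hq2, abs_le]
    have f1 := mul_le_mul_of_nonneg_left hpq hc4
    have f2 := mul_le_mul_of_nonneg_left hpq' hc4
    have f3 : 0 ≤ (1 / (d - 1) ^ 3) * P ^ 2 := mul_nonneg hc3 (sq_nonneg P)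
    have f4 : 0 ≤ (1 / (d - 1)) * Q ^ 2 := mul_nonneg hc4 (sq_nonneg Q)
    constructor
    · linarith
    · linarith
  have h3 : |((d ^ 2 - 3 * d + 3) / (d - 1) ^ 3) * p ^ 2
      + (1 / (d - 1)) * (2 * p * q + q ^ 2)| ≤
      ((d ^ 2 - 3 * d + 3) / (d - 1) ^ 3) * P ^ 2 + (1 / (d - 1)) * (2 * (P * Q) + Q ^ 2) := by
    rw [hp2, hq2, abs_le]
    have f1 := mul_le_mul_of_nonneg_left hpq hc4
    have f2 := mul_le_mul_of_nonneg_left hpq' hc4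
    have f3 : 0 ≤ ((d ^ 2 - 3 * d + 3) / (d - 1) ^ 3) * P ^ 2 := mul_nonneg hc5 (sq_nonneg P)
    have f4 : 0 ≤ (1 / (d - 1)) * Q ^ 2 := mul_nonneg hc4 (sq_nonneg Q)
    constructor
    · linarith
    · linarith
  have key : (((d ^ 2 - 5 * d + 7) / (d - 1) ^ 2) * P ^ 2 + 2 * (P * Q)
      + (2 * (d - 2) / (d - 1)) * (P * R) + Q ^ 2 + R ^ 2)
      + ((1 / (d - 1) ^ 3) * P ^ 2 + (1 / (d - 1)) * (2 * (P * Q) + Q ^ 2))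
      + (((d ^ 2 - 3 * d + 3) / (d - 1) ^ 3) * P ^ 2
        + (1 / (d - 1)) * (2 * (P * Q) + Q ^ 2)) ≤
      ((d + 1) / (d - 1) + ((d - 2) / (d - 1)) ^ 2
        + d * (d + 1) * (d - 2) / (d - 1) ^ 3) * (P + Q + R) ^ 2 := by
    rw [← sub_nonneg]
    have hid : ((d + 1) / (d - 1) + ((d - 2) / (d - 1)) ^ 2
        + d * (d + 1) * (d - 2) / (d - 1) ^ 3) * (P + Q + R) ^ 2
        - ((((d ^ 2 - 5 * d + 7) / (d - 1) ^ 2) * P ^ 2 + 2 * (P * Q)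
        + (2 * (d - 2) / (d - 1)) * (P * R) + Q ^ 2 + R ^ 2)
        + ((1 / (d - 1) ^ 3) * P ^ 2 + (1 / (d - 1)) * (2 * (P * Q) + Q ^ 2))
        + (((d ^ 2 - 3 * d + 3) / (d - 1) ^ 3) * P ^ 2
          + (1 / (d - 1)) * (2 * (P * Q) + Q ^ 2))) =
        (2 * d * (d - 2) * (d + 1) * P ^ 2 + 4 * (d - 2) * (d ^ 2 - d + 1) * (P * Q)
          + (4 * d ^ 3 - 6 * d ^ 2 - 2) * (P * R) + 2 * (d - 2) * (d ^ 2 - d + 1) * Q ^ 2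
          + 2 * (d ^ 3 - 2 * d ^ 2 + d - 1) * R ^ 2
          + 2 * (3 * d ^ 3 - 7 * d ^ 2 + 5 * d - 3) * (Q * R)) / (d - 1) ^ 3 := by
      field_simp
      ring
    rw [hid]
    apply div_nonneg _ (by positivity)
    linarith [mul_nonneg (mul_nonneg hd2 hP) hQ, mul_nonneg (mul_nonneg hd2 hP) hR,
      mul_nonneg (mul_nonneg hd2 hQ) hR, mul_nonneg hd2 (sq_nonneg P),
      mul_nonneg hd2 (sq_nonneg Q), mul_nonneg hd2 (sq_nonneg R),
      mul_nonneg hP hQ, mul_nonneg hP hR, mul_nonneg hQ hR, sq_nonneg P, sq_nonneg Q, sq_nonneg R,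
      mul_nonneg (mul_nonneg (mul_nonneg hd2 hd2) hP) hQ,
      mul_nonneg (mul_nonneg (mul_nonneg hd2 hd2) hP) hR,
      mul_nonneg (mul_nonneg (mul_nonneg hd2 hd2) hQ) hR,
      mul_nonneg (mul_nonneg hd2 hd2) (sq_nonneg P),
      mul_nonneg (mul_nonneg hd2 hd2) (sq_nonneg Q),
      mul_nonneg (mul_nonneg hd2 hd2) (sq_nonneg R),
      mul_nonneg (mul_nonneg (mul_nonneg (mul_nonneg hd2 hd2) hd2) hP) hQ,
      mul_nonneg (mul_nonneg (mul_nonneg (mul_nonneg hd2 hd2) hd2) hP) hR,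
      mul_nonneg (mul_nonneg (mul_nonneg (mul_nonneg hd2 hd2) hd2) hQ) hR,
      mul_nonneg (mul_nonneg (mul_nonneg hd2 hd2) hd2) (sq_nonneg P),
      mul_nonneg (mul_nonneg (mul_nonneg hd2 hd2) hd2) (sq_nonneg Q),
      mul_nonneg (mul_nonneg (mul_nonneg hd2 hd2) hd2) (sq_nonneg R)]
  calc _ ≤ _ := add_le_add (add_le_add h1 h2) h3
  _ ≤ _ := key
end

section
/- For d = 3, the iterates of the renormalisation map starting at the first basis vector converge to zero: ℛ₃^[n](1, 0, 0) → (0, 0, 0) in ℝ³ as n → ∞. -/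
lemma renorm_contract (x : ℝ × ℝ × ℝ) (hx : ‖x‖ ≤ 1/8) :
    ‖renorm 3 x‖ ≤ (3/4) * ‖x‖ := by
  obtain ⟨p, q, r⟩ := x
  have hm : (0:ℝ) ≤ ‖((p,q,r) : ℝ × ℝ × ℝ)‖ := norm_nonneg _
  have hp : |p| ≤ ‖((p,q,r) : ℝ × ℝ × ℝ)‖ := norm_fst_le ((p,q,r) : ℝ × ℝ × ℝ)
  have hq : |q| ≤ ‖((p,q,r) : ℝ × ℝ × ℝ)‖ :=
    le_trans (norm_fst_le ((q,r) : ℝ × ℝ)) (norm_snd_le ((p,q,r) : ℝ × ℝ × ℝ))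
  have hr : |r| ≤ ‖((p,q,r) : ℝ × ℝ × ℝ)‖ :=
    le_trans (norm_snd_le ((q,r) : ℝ × ℝ)) (norm_snd_le ((p,q,r) : ℝ × ℝ × ℝ))
  set m := ‖((p,q,r) : ℝ × ℝ × ℝ)‖ with hmdef
  have hp2 : p^2 ≤ m^2 := by rw [← sq_abs]; exact pow_le_pow_left₀ (abs_nonneg p) hp 2
  have hq2 : q^2 ≤ m^2 := by rw [← sq_abs]; exact pow_le_pow_left₀ (abs_nonneg q) hq 2
  have hr2 : r^2 ≤ m^2 := by rw [← sq_abs]; exact pow_le_pow_left₀ (abs_nonneg r) hr 2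
  have hpq : |p*q| ≤ m^2 := by rw [abs_mul, sq]; exact mul_le_mul hp hq (abs_nonneg q) hm
  have hpr : |p*r| ≤ m^2 := by rw [abs_mul, sq]; exact mul_le_mul hp hr (abs_nonneg r) hm
  rw [abs_le] at hpq hpr
  have hm2 : m^2 ≤ (1/8)*m := by nlinarith
  have key : ‖renorm 3 (p,q,r)‖ = max |((1:ℝ)/4) * p^2 + 2*p*q + p*r + q^2 + r^2|
      (max |-(((1:ℝ)/8) * p^2 + (1/2)*(2*p*q + q^2))| |((3:ℝ)/8) * p^2 + (1/2)*(2*p*q + q^2)|) := by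
    simp only [renorm, Prod.norm_def, Real.norm_eq_abs]
    norm_num
  rw [key]
  refine max_le ?_ (max_le ?_ ?_)
  all_goals rw [abs_le]; constructor <;>
    linarith [sq_nonneg p, sq_nonneg q, sq_nonneg r, hpq.1, hpq.2, hpr.1, hpr.2]

/-- for d = 3, the iterates of ℛ_d starting at (1, 0, 0) tend to 0. -/
theorem renorm_iterates_tendsto_zero_d3 :
    Filter.Tendsto (fun n => (renorm 3)^[n] (1, 0, 0)) Filter.atTop
      (nhds ((0, 0, 0) : ℝ × ℝ × ℝ)) := by
  have h0 : ((0,0,0) : ℝ × ℝ × ℝ) = 0 := rfl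
  rw [h0]
  rw [← Filter.tendsto_add_atTop_iff_nat 3]
  set x3 : ℝ × ℝ × ℝ := (renorm 3)^[3] (1,0,0) with hx3def
  have hiter : ∀ n, (renorm 3)^[n+3] ((1,0,0) : ℝ × ℝ × ℝ) = (renorm 3)^[n] x3 := by
    intro n
    rw [hx3def, ← Function.iterate_add_apply]
  have hx3 : x3 = (277/16384, -(277/32768), 615/32768) := by
    show (renorm 3) ((renorm 3) ((renorm 3) (1,0,0))) = _
    simp only [renorm]
    norm_num
  have hx3n : ‖x3‖ ≤ 1/8 := by
    rw [hx3]
    rw [Prod.norm_def, Prod.norm_def]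
    simp only [Real.norm_eq_abs, sup_le_iff]
    refine ⟨?_, ?_, ?_⟩ <;> rw [abs_le] <;> constructor <;> norm_num
  have hbound : ∀ n, ‖(renorm 3)^[n] x3‖ ≤ (1/8) * (3/4)^n := by
    intro n
    induction n with
    | zero => simpa using hx3n
    | succ k ih =>
      have hsmall : ‖(renorm 3)^[k] x3‖ ≤ 1/8 := by
        refine ih.trans ?_
        have : ((3:ℝ)/4)^k ≤ 1 := pow_le_one₀ (by norm_num) (by norm_num)
        nlinarith
      rw [Function.iterate_succ_apply']
      calc ‖renorm 3 ((renorm 3)^[k] x3)‖ ≤ (3/4) * ‖(renorm 3)^[k] x3‖ :=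
            renorm_contract _ hsmall
        _ ≤ (3/4) * ((1/8) * (3/4)^k) := by nlinarith
        _ = (1/8) * (3/4)^(k+1) := by ring
  have hpow : Filter.Tendsto (fun n : ℕ => ((3:ℝ)/4)^n) Filter.atTop (nhds 0) :=
    tendsto_pow_atTop_nhds_zero_of_lt_one (by norm_num) (by norm_num)
  have h2 := hpow.const_mul (1/8 : ℝ)
  rw [mul_zero] at h2
  exact squeeze_zero_norm (fun n => by rw [hiter n]; exact hbound n) h2
end

section
/- For every natural number m with 7 ≤ m ≤ 20, setting d = 4·cos²(π/m) + 1, the iterates of the renormalisation map starting at the first basis vector converge to zero: ℛ_d^[n](1, 0, 0) → (0, 0, 0) in ℝ³ as n → ∞. -/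
lemma abs_mul_le' {a A b B : ℝ} (ha : |a| ≤ A) (hb : |b| ≤ B) : |a * b| ≤ A * B := by
  rw [abs_mul]
  exact mul_le_mul ha hb (abs_nonneg b) ((abs_nonneg a).trans ha)

lemma renorm_step (d p q r P Q R : ℝ) (hd : 4 ≤ d) (hd' : d ≤ 5)
    (hp : |p| ≤ P) (hq : |q| ≤ Q) (hr : |r| ≤ R) :
    |(renorm d (p, q, r)).1| ≤ 7/16 * P^2 + 2 * (P*Q) + 3/2 * (P*R) + Q^2 + R^2 ∧
    |(renorm d (p, q, r)).2.1| ≤ 1/27 * P^2 + 1/3 * (2*(P*Q) + Q^2) ∧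
    |(renorm d (p, q, r)).2.2| ≤ 7/27 * P^2 + 1/3 * (2*(P*Q) + Q^2) := by
  have hP : 0 ≤ P := (abs_nonneg p).trans hp
  have hQ : 0 ≤ Q := (abs_nonneg q).trans hq
  have hR : 0 ≤ R := (abs_nonneg r).trans hr
  have hd1 : (0:ℝ) < d - 1 := by linarith
  have hA : |(d ^ 2 - 5 * d + 7) / (d - 1) ^ 2| ≤ 7/16 := by
    rw [abs_div, abs_of_nonneg (by nlinarith : (0:ℝ) ≤ d ^ 2 - 5 * d + 7),
      abs_of_nonneg (by positivity : (0:ℝ) ≤ (d-1)^2), div_le_iff₀ (by positivity)]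
    nlinarith [sq_nonneg (d - 5), (by nlinarith : (3*d-7)*(d-5) ≤ 0)]
  have hB : |2 * (d - 2) / (d - 1)| ≤ 3/2 := by
    rw [abs_div, abs_of_nonneg (by linarith : (0:ℝ) ≤ 2*(d-2)),
      abs_of_nonneg (by linarith : (0:ℝ) ≤ d-1), div_le_iff₀ hd1]
    linarith
  have hc3 : |1 / (d - 1) ^ 3| ≤ 1/27 := by
    rw [abs_div, abs_one, abs_of_nonneg (by positivity : (0:ℝ) ≤ (d-1)^3),
      div_le_iff₀ (by positivity)]
    nlinarith
  have hc1 : |1 / (d - 1)| ≤ 1/3 := by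
    rw [abs_div, abs_one, abs_of_nonneg (le_of_lt hd1), div_le_iff₀ hd1]
    linarith
  have hC : |(d ^ 2 - 3 * d + 3) / (d - 1) ^ 3| ≤ 7/27 := by
    rw [abs_div, abs_of_nonneg (by nlinarith : (0:ℝ) ≤ d ^ 2 - 3 * d + 3),
      abs_of_nonneg (by positivity : (0:ℝ) ≤ (d-1)^3), div_le_iff₀ (by positivity)]
    nlinarith [mul_nonneg (by linarith : (0:ℝ) ≤ d - 4) (by nlinarith [sq_nonneg (7*d-10)] : (0:ℝ) ≤ 7*d^2-20*d+22)]
  have hp2 : |p^2| ≤ P^2 := by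
    rw [abs_pow]; exact pow_le_pow_left₀ (abs_nonneg p) hp 2
  have hq2 : |q^2| ≤ Q^2 := by
    rw [abs_pow]; exact pow_le_pow_left₀ (abs_nonneg q) hq 2
  have hr2 : |r^2| ≤ R^2 := by
    rw [abs_pow]; exact pow_le_pow_left₀ (abs_nonneg r) hr 2
  have t1 : |(d ^ 2 - 5 * d + 7) / (d - 1) ^ 2 * p ^ 2| ≤ 7/16 * P^2 := abs_mul_le' hA hp2
  have t2 : |2 * p * q| ≤ 2 * (P * Q) := by
    have : |2 * p * q| ≤ 2 * P * Q := abs_mul_le' (abs_mul_le' (by simp : |(2:ℝ)| ≤ 2) hp) hq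
    linarith [this]
  have t3 : |2 * (d - 2) / (d - 1) * p * r| ≤ 3/2 * (P * R) := by
    have : |2 * (d - 2) / (d - 1) * p * r| ≤ 3/2 * P * R := abs_mul_le' (abs_mul_le' hB hp) hr
    linarith [this]
  have tmix : |2 * p * q + q ^ 2| ≤ 2 * (P * Q) + Q^2 :=
    (abs_add_le _ _).trans (by linarith [t2, hq2])
  have t4 : |(1 / (d - 1) ^ 3) * p ^ 2| ≤ 1/27 * P^2 := abs_mul_le' hc3 hp2
  have t5 : |(1 / (d - 1)) * (2 * p * q + q ^ 2)| ≤ 1/3 * (2*(P*Q) + Q^2) := abs_mul_le' hc1 tmix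
  have t6 : |(d ^ 2 - 3 * d + 3) / (d - 1) ^ 3 * p ^ 2| ≤ 7/27 * P^2 := abs_mul_le' hC hp2
  refine ⟨?_, ?_, ?_⟩
  · show |(d ^ 2 - 5 * d + 7) / (d - 1) ^ 2 * p ^ 2 + 2 * p * q
      + 2 * (d - 2) / (d - 1) * p * r + q ^ 2 + r ^ 2| ≤ _
    calc |(d ^ 2 - 5 * d + 7) / (d - 1) ^ 2 * p ^ 2 + 2 * p * q
        + 2 * (d - 2) / (d - 1) * p * r + q ^ 2 + r ^ 2|
        ≤ |(d ^ 2 - 5 * d + 7) / (d - 1) ^ 2 * p ^ 2 + 2 * p * q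
          + 2 * (d - 2) / (d - 1) * p * r + q ^ 2| + |r ^ 2| := abs_add_le _ _
      _ ≤ |(d ^ 2 - 5 * d + 7) / (d - 1) ^ 2 * p ^ 2 + 2 * p * q
          + 2 * (d - 2) / (d - 1) * p * r| + |q ^ 2| + |r ^ 2| := by
            linarith [abs_add_le ((d ^ 2 - 5 * d + 7) / (d - 1) ^ 2 * p ^ 2 + 2 * p * q
              + 2 * (d - 2) / (d - 1) * p * r) (q ^ 2)]
      _ ≤ |(d ^ 2 - 5 * d + 7) / (d - 1) ^ 2 * p ^ 2 + 2 * p * q|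
          + |2 * (d - 2) / (d - 1) * p * r| + |q ^ 2| + |r ^ 2| := by
            linarith [abs_add_le ((d ^ 2 - 5 * d + 7) / (d - 1) ^ 2 * p ^ 2 + 2 * p * q)
              (2 * (d - 2) / (d - 1) * p * r)]
      _ ≤ |(d ^ 2 - 5 * d + 7) / (d - 1) ^ 2 * p ^ 2| + |2 * p * q|
          + |2 * (d - 2) / (d - 1) * p * r| + |q ^ 2| + |r ^ 2| := by
            linarith [abs_add_le ((d ^ 2 - 5 * d + 7) / (d - 1) ^ 2 * p ^ 2) (2 * p * q)]
      _ ≤ _ := by linarith [t1, t2, t3, hq2, hr2]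
  · show |-((1 / (d - 1) ^ 3) * p ^ 2 + (1 / (d - 1)) * (2 * p * q + q ^ 2))| ≤ _
    rw [abs_neg]
    exact (abs_add_le _ _).trans (by linarith [t4, t5])
  · show |(d ^ 2 - 3 * d + 3) / (d - 1) ^ 3 * p ^ 2
      + (1 / (d - 1)) * (2 * p * q + q ^ 2)| ≤ _
    exact (abs_add_le _ _).trans (by linarith [t6, t5])

lemma renorm_iter_bound (d : ℝ) (hd : 4 ≤ d) (hd' : d ≤ 5) (x : ℝ × ℝ × ℝ)
    (h1 : |x.1| ≤ 1/9) (h2 : |x.2.1| ≤ 1/9) (h3 : |x.2.2| ≤ 1/9) :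
    ∀ n : ℕ, |((renorm d)^[n] x).1| ≤ (2/3)^n * (1/9) ∧
      |((renorm d)^[n] x).2.1| ≤ (2/3)^n * (1/9) ∧
      |((renorm d)^[n] x).2.2| ≤ (2/3)^n * (1/9) := by
  intro n
  induction n with
  | zero =>
    simp only [Function.iterate_zero, id_eq, pow_zero, one_mul]
    exact ⟨h1, h2, h3⟩
  | succ n ih =>
    set y := (renorm d)^[n] x with hy
    set c : ℝ := (2/3)^n * (1/9) with hc
    have hc0 : 0 ≤ c := by positivity
    have hc9 : c ≤ 1/9 := by
      have : ((2:ℝ)/3)^n ≤ 1 := pow_le_one₀ (by norm_num) (by norm_num)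
      nlinarith
    obtain ⟨s1, s2, s3⟩ := renorm_step d y.1 y.2.1 y.2.2 c c c hd hd' ih.1 ih.2.1 ih.2.2
    have hyy : (renorm d)^[n+1] x = renorm d (y.1, y.2.1, y.2.2) := by
      rw [Function.iterate_succ_apply', ← hy]
    rw [hyy]
    have hbound : 7/16 * c^2 + 2 * (c*c) + 3/2 * (c*c) + c^2 + c^2 ≤ (2/3)^(n+1) * (1/9) := by
      have : (2/3 : ℝ)^(n+1) * (1/9) = (2/3) * c := by rw [hc]; ring
      rw [this]
      nlinarith
    have hbound2 : 1/27 * c^2 + 1/3 * (2*(c*c) + c^2) ≤ (2/3)^(n+1) * (1/9) := by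
      have : (2/3 : ℝ)^(n+1) * (1/9) = (2/3) * c := by rw [hc]; ring
      rw [this]
      nlinarith
    exact ⟨s1.trans hbound, s2.trans hbound2, s3.trans (by nlinarith)⟩

/-- for every natural m with 7 ≤ m ≤ 20 and d = 4cos²(π/m) + 1,
the iterates of ℛ_d starting at (1, 0, 0) tend to 0. -/
theorem renorm_iterates_tendsto_zero_cos (m : ℕ) (hm₁ : 7 ≤ m) (hm₂ : m ≤ 20) :
    Filter.Tendsto
      (fun n => (renorm (4 * Real.cos (Real.pi / m) ^ 2 + 1))^[n] (1, 0, 0))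
      Filter.atTop (nhds ((0, 0, 0) : ℝ × ℝ × ℝ)) := by
  set d : ℝ := 4 * Real.cos (Real.pi / m) ^ 2 + 1 with hdd
  have hm0 : (0:ℝ) < m := by positivity
  have hm6 : (6:ℝ) ≤ m := by exact_mod_cast le_trans (by norm_num) hm₁
  have hx0 : 0 ≤ Real.pi / m := by positivity
  have hx6 : Real.pi / m ≤ Real.pi / 6 :=
    div_le_div_of_nonneg_left Real.pi_pos.le (by norm_num) hm6
  have hcos_lb : Real.cos (Real.pi / 6) ≤ Real.cos (Real.pi / m) :=
    Real.cos_le_cos_of_nonneg_of_le_pi hx0 (by linarith [Real.pi_pos]) hx6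
  rw [Real.cos_pi_div_six] at hcos_lb
  have hsqrt3 : Real.sqrt 3 ^ 2 = 3 := Real.sq_sqrt (by norm_num)
  have hsqrt3' : (0:ℝ) ≤ Real.sqrt 3 / 2 := by positivity
  have hd : 4 ≤ d := by
    have : (Real.sqrt 3 / 2)^2 ≤ Real.cos (Real.pi / m) ^ 2 :=
      pow_le_pow_left₀ hsqrt3' hcos_lb 2
    have h34 : (Real.sqrt 3 / 2)^2 = 3/4 := by rw [div_pow, hsqrt3]; norm_num
    rw [hdd]; nlinarith
  have hd' : d ≤ 5 := by
    have h1 := Real.cos_le_one (Real.pi / m)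
    have h2 := Real.neg_one_le_cos (Real.pi / m)
    rw [hdd]; nlinarith
  -- three explicit steps
  have step1 := renorm_step d 1 0 0 1 0 0 hd hd' (by norm_num) (by norm_num) (by norm_num)
  set x1 := renorm d (1, 0, 0) with hx1
  have b1p : |x1.1| ≤ 7/16 := step1.1.trans (by norm_num)
  have b1q : |x1.2.1| ≤ 1/27 := step1.2.1.trans (by norm_num)
  have b1r : |x1.2.2| ≤ 7/27 := step1.2.2.trans (by norm_num)
  have step2 := renorm_step d x1.1 x1.2.1 x1.2.2 (7/16) (1/27) (7/27) hd hd' b1p b1q b1r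
  set x2 := renorm d (x1.1, x1.2.1, x1.2.2) with hx2
  have b2p : |x2.1| ≤ 9/25 := step2.1.trans (by norm_num)
  have b2q : |x2.2.1| ≤ 37/2000 := step2.2.1.trans (by norm_num)
  have b2r : |x2.2.2| ≤ 61/1000 := step2.2.2.trans (by norm_num)
  have step3 := renorm_step d x2.1 x2.2.1 x2.2.2 (9/25) (37/2000) (61/1000) hd hd' b2p b2q b2r
  set x3 := renorm d (x2.1, x2.2.1, x2.2.2) with hx3
  have b3p : |x3.1| ≤ 1/9 := step3.1.trans (by norm_num)
  have b3q : |x3.2.1| ≤ 1/9 := step3.2.1.trans (by norm_num)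
  have b3r : |x3.2.2| ≤ 1/9 := step3.2.2.trans (by norm_num)
  have hiter := renorm_iter_bound d hd hd' x3 b3p b3q b3r
  -- the tail sequence tends to zero
  have hx3eq : (renorm d)^[3] (1, 0, 0) = x3 := by
    rw [show (3:ℕ) = 1 + 1 + 1 from rfl]
    rw [Function.iterate_succ_apply', Function.iterate_succ_apply',
      Function.iterate_one]
  have htail : Filter.Tendsto (fun n => (renorm d)^[n] x3) Filter.atTop
      (nhds (0 : ℝ × ℝ × ℝ)) := by
    refine squeeze_zero_norm (a := fun n => (2/3)^n * (1/9)) ?_ ?_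
    · intro n
      obtain ⟨h1, h2, h3⟩ := hiter n
      have hnorm : ‖(renorm d)^[n] x3‖ =
          max |((renorm d)^[n] x3).1| (max |((renorm d)^[n] x3).2.1|
            |((renorm d)^[n] x3).2.2|) := by
        rw [Prod.norm_def, Prod.norm_def, Real.norm_eq_abs, Real.norm_eq_abs,
          Real.norm_eq_abs]
      rw [hnorm]
      exact max_le h1 (max_le h2 h3)
    · have := tendsto_pow_atTop_nhds_zero_of_lt_one (by norm_num : (0:ℝ) ≤ 2/3)
        (by norm_num : (2:ℝ)/3 < 1)
      have h9 := this.mul_const (1/9 : ℝ)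
      simp only [zero_mul] at h9
      exact h9
  have hfull : Filter.Tendsto (fun n => (renorm d)^[n + 3] (1, 0, 0)) Filter.atTop
      (nhds (0 : ℝ × ℝ × ℝ)) := by
    have : (fun n => (renorm d)^[n + 3] ((1:ℝ), (0:ℝ), (0:ℝ))) =
        fun n => (renorm d)^[n] x3 := by
      funext n
      rw [Function.iterate_add_apply, hx3eq]
    rw [this]; exact htail
  have := (Filter.tendsto_add_atTop_iff_nat
      (f := fun n => (renorm d)^[n] ((1:ℝ), (0:ℝ), (0:ℝ))) 3).mp hfull
  exact this
end
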